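/- Let m ≥ 2, let r_1,…,r_m ∈ ℝ^n and w_1,…,w_m ∈ ℝ. Define for each coordinate j: p_j = max_{1≤i≤m}(r_{ji} + w_i) and q_j = min_{1≤i≤m}(r_{ji} − w_i), where r_{ji} is the j-th coordinate of r_i. Then min_{x∈ℝ^n} max_{1≤i≤m} ( ρ(r_i, x) + w_i ) = max_{1≤j≤n} (p_j − q_j)/2, where ρ is the Chebyshev distance ρ(r,x) = max_j |r_j − x_j|. -/
import Mathlib


/-- Chebyshev (L∞) distance on ℝ^n. -/
noncomputable def cheb {n : ℕ} (hn : 0 < n) (r x : Fin n → ℝ) : ℝ :=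
  Finset.univ.sup' (Finset.univ_nonempty_iff.mpr ⟨⟨0, hn⟩⟩) fun j => |r j - x j|

theorem unconstrained_location_min_value {n m : ℕ} (hn : 0 < n) (hm : 2 ≤ m)
    (r : Fin m → Fin n → ℝ) (w : Fin m → ℝ) (p q : Fin n → ℝ)
    (hp : ∀ j, p j = Finset.univ.sup' (Finset.univ_nonempty_iff.mpr ⟨⟨0, by omega⟩⟩)
      (fun i => r i j + w i))
    (hq : ∀ j, q j = Finset.univ.inf' (Finset.univ_nonempty_iff.mpr ⟨⟨0, by omega⟩⟩)
      (fun i => r i j - w i)) :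
    IsLeast
      (Set.range fun x : Fin n → ℝ =>
        Finset.univ.sup' (Finset.univ_nonempty_iff.mpr ⟨⟨0, by omega⟩⟩)
          fun i => cheb hn (r i) x + w i)
      (Finset.univ.sup' (Finset.univ_nonempty_iff.mpr ⟨⟨0, hn⟩⟩)
        fun j => (p j - q j) / 2) := by
  have hmne : (Finset.univ : Finset (Fin m)).Nonempty :=
    Finset.univ_nonempty_iff.mpr ⟨⟨0, by omega⟩⟩
  have hnne : (Finset.univ : Finset (Fin n)).Nonempty :=
    Finset.univ_nonempty_iff.mpr ⟨⟨0, hn⟩⟩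
  set Λ := Finset.univ.sup' hnne fun j => (p j - q j) / 2 with hΛ
  -- lower bound for all x
  have key : ∀ x : Fin n → ℝ,
      Λ ≤ Finset.univ.sup' hmne fun i => cheb hn (r i) x + w i := by
    intro x
    apply Finset.sup'_le
    intro j _
    obtain ⟨i1, _, hi1⟩ := Finset.exists_mem_eq_sup' hmne fun i => r i j + w i
    obtain ⟨i2, _, hi2⟩ := Finset.exists_mem_eq_inf' hmne fun i => r i j - w i
    have h1 : |r i1 j - x j| + w i1 ≤
        Finset.univ.sup' hmne fun i => cheb hn (r i) x + w i := by
      refine le_trans ?_ (Finset.le_sup' _ (Finset.mem_univ i1))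
      have : |r i1 j - x j| ≤ cheb hn (r i1) x := by
        unfold cheb; exact Finset.le_sup' (fun j => |r i1 j - x j|) (Finset.mem_univ j)
      linarith
    have h2 : |r i2 j - x j| + w i2 ≤
        Finset.univ.sup' hmne fun i => cheb hn (r i) x + w i := by
      refine le_trans ?_ (Finset.le_sup' _ (Finset.mem_univ i2))
      have : |r i2 j - x j| ≤ cheb hn (r i2) x := by
        unfold cheb; exact Finset.le_sup' (fun j => |r i2 j - x j|) (Finset.mem_univ j)
      linarith
    have a1 := le_abs_self (r i1 j - x j)
    have a2 := neg_abs_le (r i2 j - x j)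
    have hpj : p j = r i1 j + w i1 := (hp j).trans hi1
    have hqj : q j = r i2 j - w i2 := (hq j).trans hi2
    linarith
  constructor
  · refine ⟨fun j => (p j + q j) / 2, ?_⟩
    refine le_antisymm ?_ (key _)
    apply Finset.sup'_le
    intro i _
    have hc : cheb hn (r i) (fun j => (p j + q j) / 2) ≤ Λ - w i := by
      unfold cheb
      apply Finset.sup'_le
      intro j _
      have hpj : r i j + w i ≤ p j := by
        rw [hp]; exact Finset.le_sup' (fun i => r i j + w i) (Finset.mem_univ i)
      have hqj : q j ≤ r i j - w i := by
        rw [hq]; exact Finset.inf'_le (fun i => r i j - w i) (Finset.mem_univ i)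
      have hL : (p j - q j) / 2 ≤ Λ := Finset.le_sup' (fun j => (p j - q j) / 2) (Finset.mem_univ j)
      rw [abs_le]
      constructor <;> simp only <;> linarith
    linarith
  · rintro v ⟨x, rfl⟩
    exact key x
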